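/- For integers n, b with n/2 < b < n and s ≥ 0, define F_{n,b}(s) := (n/((n-b)·b·(b-1))) · ∫₀¹ (∑_{k=1}^{b-1} 1/(k-p)) / (Be(n-b, e^{-s}·p) · Be(b-1, 1-p)) dp. Let (b_n) be a sequence of integers with n/2 < b_n < n and b_n/n → u for some u ∈ [1/2, 1), and set α := log(1-u) - log u. Then lim_{n→∞} (n/log n)·F_{n,b_n}(0) = G(α)/(u(1-u)), where G(x) := (1+e^x)/(π²+x²). -/

import Mathlib

open Real

/-- The real Beta function. -/
noncomputable def Be (x y : ℝ) : ℝ := Real.Gamma x * Real.Gamma y / Real.Gamma (x + y)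

/-- `F_{n,b}(s) = P(ℓ_{n,b} > s)` for the Bolthausen–Sznitman coalescent, `n/2 < b < n`. -/
noncomputable def F (n b : ℕ) (s : ℝ) : ℝ :=
  ((n : ℝ) / (((n : ℝ) - (b : ℝ)) * (b : ℝ) * ((b : ℝ) - 1))) *
    ∫ p in (0:ℝ)..1, (∑ k ∈ Finset.Icc 1 (b - 1), 1 / ((k : ℝ) - p)) /
      (Be ((n : ℝ) - (b : ℝ)) (Real.exp (-s) * p) * Be ((b : ℝ) - 1) (1 - p))

/-- `G(x) = (1+e^x)/(π²+x²)`. -/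
noncomputable def G (x : ℝ) : ℝ := (1 + Real.exp x) / (π ^ 2 + x ^ 2)

/-!
Write `S_m(p) = ∑_{k=1}^m 1/(k-p)`, `x = n - b` and `y = b - 1`. By Euler's reflection formula the
integrand of `F_{n,b}(0)` is `S_{b-1}(p) · Γ(x+p)/Γ(x) · Γ(y+1-p)/Γ(y) · sin(πp)/π`. Wendel's
inequality, a consequence of the log-convexity of `Γ`, gives `Γ(x+p) ~ Γ(x) x^p` as `x → ∞`, and
`S_{b-1}(p) ~ log n`; so after scaling by `n / log n` the integrand tends to
`u⁻¹ (1-u)^(p-1) u^(-p) sin(πp)/π`. It is bounded uniformly in `p`, because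
`S_m(p) sin(πp) ≤ π + 1 + log m` absorbs the pole of `S_m` at `p = 1`. Dominated convergence and
`∫₀¹ e^{αp} sin(πp) dp = π(1+e^α)/(π²+α²)` finish the proof.
-/

open Set MeasureTheory Filter Topology

noncomputable def gammaRatio (x p : ℝ) : ℝ := Gamma (x + p) / (Gamma x * x ^ p)

section GammaRatio

variable {x p : ℝ}

lemma Gamma_add_le_Gamma_mul_rpow (hx : 0 < x) (hp : p ∈ Ioo (0 : ℝ) 1) :
    Gamma (x + p) ≤ Gamma x * x ^ p := by
  have hG := Gamma_pos_of_pos hx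
  calc Gamma (x + p) = Gamma ((1 - p) * x + p * (x + 1)) := by ring_nf
    _ ≤ Gamma x ^ (1 - p) * Gamma (x + 1) ^ p :=
      Gamma_mul_add_mul_le_rpow_Gamma_mul_rpow_Gamma hx (by linarith) (by linarith [hp.2]) hp.1
        (by ring)
    _ = Gamma x * x ^ p := by
      rw [Gamma_add_one hx.ne', mul_rpow hx.le hG.le, ← mul_assoc, mul_comm _ (x ^ p), mul_assoc,
        ← rpow_add hG, sub_add_cancel, rpow_one, mul_comm]

lemma mul_Gamma_le_Gamma_add_mul_rpow (hx : 0 < x) (hp : p ∈ Ioo (0 : ℝ) 1) :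
    x * Gamma x ≤ Gamma (x + p) * (x + p) ^ (1 - p) := by
  have hxp : 0 < x + p := by linarith [hp.1]
  have hG := Gamma_pos_of_pos hxp
  calc x * Gamma x = Gamma (p * (x + p) + (1 - p) * (x + p + 1)) := by
        rw [← Gamma_add_one hx.ne']; ring_nf
    _ ≤ Gamma (x + p) ^ p * Gamma (x + p + 1) ^ (1 - p) :=
      Gamma_mul_add_mul_le_rpow_Gamma_mul_rpow_Gamma hxp (by linarith) hp.1 (by linarith [hp.2])
        (by ring)
    _ = Gamma (x + p) * (x + p) ^ (1 - p) := by
      rw [Gamma_add_one hxp.ne', mul_rpow hxp.le hG.le, ← mul_assoc, mul_comm _ ((x + p) ^ (1 - p)),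
        mul_assoc, ← rpow_add hG, add_sub_cancel, rpow_one, mul_comm]

lemma gammaRatio_le_one (hx : 0 < x) (hp : p ∈ Ioo (0 : ℝ) 1) : gammaRatio x p ≤ 1 := by
  have := Gamma_pos_of_pos hx
  exact div_le_one_of_le₀ (Gamma_add_le_Gamma_mul_rpow hx hp) (by positivity)

lemma gammaRatio_nonneg (hx : 0 < x) (hp : p ∈ Ioo (0 : ℝ) 1) : 0 ≤ gammaRatio x p := by
  have := Gamma_pos_of_pos hx
  have := Gamma_pos_of_pos (show 0 < x + p by linarith [hp.1])
  unfold gammaRatio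
  positivity

lemma div_add_rpow_le_gammaRatio (hx : 0 < x) (hp : p ∈ Ioo (0 : ℝ) 1) :
    (x / (x + p)) ^ (1 - p) ≤ gammaRatio x p := by
  have hxp : 0 < x + p := by linarith [hp.1]
  have := Gamma_pos_of_pos hx
  have := rpow_pos_of_pos hxp (1 - p)
  have key := mul_Gamma_le_Gamma_add_mul_rpow hx hp
  rw [gammaRatio, le_div_iff₀ (by positivity), div_rpow hx.le hxp.le, div_mul_eq_mul_div,
    div_le_iff₀ (by positivity)]
  calc x ^ (1 - p) * (Gamma x * x ^ p) = x * Gamma x := by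
        rw [mul_left_comm, ← rpow_add hx, sub_add_cancel, rpow_one, mul_comm]
    _ ≤ _ := key

lemma tendsto_gammaRatio {ι : Type*} {l : Filter ι} {z : ι → ℝ} (hz : Tendsto z l atTop)
    (hp : p ∈ Ioo (0 : ℝ) 1) : Tendsto (fun i => gammaRatio (z i) p) l (𝓝 1) := by
  have hbase : Tendsto (fun i => z i / (z i + p)) l (𝓝 1) := by
    have : Tendsto (fun i => 1 - p / (z i + p)) l (𝓝 (1 - 0)) :=
      tendsto_const_nhds.sub (tendsto_const_nhds.div_atTop (tendsto_atTop_add_const_right _ p hz))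
    refine (sub_zero (1 : ℝ) ▸ this).congr' ?_
    filter_upwards [hz.eventually_gt_atTop 0] with i hi
    field_simp [show z i + p ≠ 0 by linarith [hp.1]]
    ring
  have hlow : Tendsto (fun i => (z i / (z i + p)) ^ (1 - p)) l (𝓝 1) := by
    simpa using hbase.rpow_const (p := 1 - p) (Or.inl one_ne_zero)
  refine tendsto_of_tendsto_of_tendsto_of_le_of_le' hlow tendsto_const_nhds ?_ ?_
  · filter_upwards [hz.eventually_gt_atTop 0] with i hi
    exact div_add_rpow_le_gammaRatio hi hp
  · filter_upwards [hz.eventually_gt_atTop 0] with i hi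
    exact gammaRatio_le_one hi hp

lemma continuousAt_gammaRatio (hx : 0 < x) (hxp : 0 < x + p) : ContinuousAt (gammaRatio x) p := by
  have hΓ : ContinuousAt Gamma (x + p) :=
    (differentiableAt_Gamma fun m => by linarith [(m.cast_nonneg : (0 : ℝ) ≤ m)]).continuousAt
  have := Gamma_pos_of_pos hx
  exact (hΓ.comp (continuousAt_const.add continuousAt_id)).div
    (continuousAt_const.mul (continuousAt_const_rpow hx.ne')) (by positivity)

end GammaRatio

section SumInvSub

variable {p : ℝ}

lemma harmonic_le_sum_inv_sub (m : ℕ) (hp0 : 0 ≤ p) (hp1 : p < 1) :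
    (harmonic m : ℝ) ≤ ∑ k ∈ Finset.Icc 1 m, 1 / ((k : ℝ) - p) := by
  rw [harmonic_eq_sum_Icc]
  push_cast
  refine Finset.sum_le_sum fun k hk => ?_
  have hk : (1 : ℝ) ≤ k := by exact_mod_cast (Finset.mem_Icc.1 hk).1
  rw [one_div]
  exact inv_anti₀ (by linarith) (by linarith)

lemma sum_inv_sub_le_inv_one_sub_add_harmonic (m : ℕ) (hp1 : p < 1) :
    ∑ k ∈ Finset.Icc 1 m, 1 / ((k : ℝ) - p) ≤ 1 / (1 - p) + harmonic m := by
  -- Comparing the `k+1`-st term with `1 / k` shifts the harmonic sum by one.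
  have shifted : ∀ m : ℕ,
      ∑ k ∈ Finset.Icc 1 (m + 1), 1 / ((k : ℝ) - p) ≤ 1 / (1 - p) + harmonic m := by
    intro m
    induction m with
    | zero => simp
    | succ m ih =>
      rw [Finset.sum_Icc_succ_top (by omega), harmonic_succ]
      have : 1 / ((m + 1 + 1 : ℕ) - p) ≤ ((m + 1 : ℕ) : ℝ)⁻¹ := by
        rw [one_div]; push_cast; exact inv_anti₀ (by positivity) (by linarith)
      push_cast at ih this ⊢
      linarith
  rcases m with _ | m
  · simp [inv_nonneg.2 (sub_nonneg.2 hp1.le)]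
  · refine (shifted m).trans ?_
    rw [harmonic_succ]
    push_cast
    linarith [(inv_pos.2 (m.cast_add_one_pos : (0 : ℝ) < m + 1))]

lemma sum_inv_sub_mul_sin_le (m : ℕ) (hp0 : 0 ≤ p) (hp1 : p < 1) :
    (∑ k ∈ Finset.Icc 1 m, 1 / ((k : ℝ) - p)) * sin (π * p) ≤ π + 1 + log m := by
  have hsin0 : 0 ≤ sin (π * p) :=
    sin_nonneg_of_nonneg_of_le_pi (by positivity) (by nlinarith [pi_pos])
  have hsin1 : sin (π * p) ≤ π * (1 - p) := by
    rw [← sin_pi_sub, show π - π * p = π * (1 - p) by ring]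
    exact sin_le (by nlinarith [pi_pos])
  have hH0 : (0 : ℝ) ≤ harmonic m :=
    (log_nonneg (by simp)).trans (log_add_one_le_harmonic m)
  calc (∑ k ∈ Finset.Icc 1 m, 1 / ((k : ℝ) - p)) * sin (π * p)
      ≤ (1 / (1 - p) + harmonic m) * sin (π * p) :=
        mul_le_mul_of_nonneg_right (sum_inv_sub_le_inv_one_sub_add_harmonic m hp1) hsin0
    _ = sin (π * p) / (1 - p) + harmonic m * sin (π * p) := by ring
    _ ≤ π + harmonic m * 1 := by
        gcongr
        · rwa [div_le_iff₀ (by linarith)]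
        · exact sin_le_one _
    _ ≤ π + 1 + log m := by linarith [harmonic_le_one_add_log m]

lemma tendsto_const_add_log_div_log {m : ℕ → ℝ} {c : ℝ} (hc : 0 < c)
    (hm : Tendsto (fun n => m n / n) atTop (𝓝 c)) (C : ℝ) :
    Tendsto (fun n : ℕ => (C + log (m n)) / log n) atTop (𝓝 1) := by
  have hlog : Tendsto (fun n : ℕ => log n) atTop atTop :=
    tendsto_log_atTop.comp tendsto_natCast_atTop_atTop
  have : Tendsto (fun n => (C + log (m n / n)) / log n + 1) atTop (𝓝 (0 + 1)) :=
    ((tendsto_const_nhds.add (hm.log hc.ne')).div_atTop hlog).add_const 1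
  refine (zero_add (1 : ℝ) ▸ this).congr' ?_
  filter_upwards [hm.eventually (eventually_gt_nhds hc), hlog.eventually_gt_atTop 0,
    eventually_gt_atTop 0] with n hmn hlogn hn0
  have hn : (0 : ℝ) < n := Nat.cast_pos.2 hn0
  rw [log_div ((div_pos_iff_of_pos_right hn).1 hmn).ne' hn.ne']
  field_simp
  ring

lemma tendsto_sum_inv_sub_div_log {m : ℕ → ℕ} {c : ℝ} (hc : 0 < c)
    (hm : Tendsto (fun n => (m n : ℝ) / n) atTop (𝓝 c)) (hp0 : 0 ≤ p) (hp1 : p < 1) :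
    Tendsto (fun n : ℕ => (∑ k ∈ Finset.Icc 1 (m n), 1 / ((k : ℝ) - p)) / log n) atTop (𝓝 1) := by
  have hlog : ∀ᶠ n : ℕ in atTop, 0 < log n :=
    (tendsto_log_atTop.comp tendsto_natCast_atTop_atTop).eventually_gt_atTop 0
  refine tendsto_of_tendsto_of_tendsto_of_le_of_le'
    (by simpa using tendsto_const_add_log_div_log hc hm 0)
    (tendsto_const_add_log_div_log hc hm (1 / (1 - p) + 1)) ?_ ?_
  · filter_upwards [hlog, hm.eventually (eventually_gt_nhds hc)] with n hn hmn
    have hm0 : 0 < m n := Nat.pos_of_ne_zero fun h => by simp [h] at hmn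
    gcongr
    calc log (m n) ≤ log (m n + 1 : ℕ) := by gcongr; simp
      _ ≤ harmonic (m n) := log_add_one_le_harmonic _
      _ ≤ _ := harmonic_le_sum_inv_sub _ hp0 hp1
  · filter_upwards [hlog] with n hn
    gcongr
    calc _ ≤ 1 / (1 - p) + (harmonic (m n) : ℝ) := sum_inv_sub_le_inv_one_sub_add_harmonic _ hp1
      _ ≤ _ := by linarith [harmonic_le_one_add_log (m n)]

end SumInvSub

lemma integral_exp_mul_mul_sin_pi_mul (a : ℝ) :
    ∫ p in (0 : ℝ)..1, exp (a * p) * sin (π * p) = π * (1 + exp a) / (π ^ 2 + a ^ 2) := by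
  have hne : π ^ 2 + a ^ 2 ≠ 0 := by positivity
  have hderiv : ∀ p : ℝ, HasDerivAt
      (fun p => exp (a * p) * (a * sin (π * p) - π * cos (π * p)) / (π ^ 2 + a ^ 2))
      (exp (a * p) * sin (π * p)) p := by
    intro p
    have hlin : ∀ c : ℝ, HasDerivAt (fun p => c * p) c p := fun c => by
      simpa using (hasDerivAt_id p).const_mul c
    refine (((hlin a).exp.fun_mul (((hlin π).sin.const_mul a).fun_sub
      ((hlin π).cos.const_mul π))).div_const (π ^ 2 + a ^ 2)).congr_deriv ?_
    field_simp
    ring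
  rw [intervalIntegral.integral_eq_sub_of_hasDerivAt (fun p _ => hderiv p)
    (Continuous.intervalIntegrable (by fun_prop) _ _)]
  simp
  field_simp
  ring

noncomputable def limitDensity (u p : ℝ) : ℝ :=
  u⁻¹ * (1 - u) ^ (p - 1) * u ^ (-p) * (sin (π * p) / π)

lemma limitDensity_eq {u : ℝ} (hu0 : 0 < u) (hu1 : u < 1) (p : ℝ) :
    limitDensity u p =
      (π * (u * (1 - u)))⁻¹ * (exp ((log (1 - u) - log u) * p) * sin (π * p)) := by
  have h1u : 0 < 1 - u := by linarith
  rw [limitDensity, ← log_div h1u.ne' hu0.ne', mul_comm _ p, ← rpow_def_of_pos (by positivity),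
    div_rpow h1u.le hu0.le, rpow_sub h1u, rpow_one, rpow_neg hu0.le]
  field_simp

lemma integral_limitDensity {u : ℝ} (hu0 : 0 < u) (hu1 : u < 1) :
    ∫ p in Ioo (0 : ℝ) 1, limitDensity u p = G (log (1 - u) - log u) / (u * (1 - u)) := by
  have h1u : 0 < 1 - u := by linarith
  rw [← integral_Ioc_eq_integral_Ioo, ← intervalIntegral.integral_of_le zero_le_one]
  simp_rw [limitDensity_eq hu0 hu1]
  rw [intervalIntegral.integral_const_mul, integral_exp_mul_mul_sin_pi_mul, G]
  field_simp

lemma Be_mul_Be_one_sub (x y p : ℝ) :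
    Be x p * Be y (1 - p) =
      Gamma x * Gamma y / (Gamma (x + p) * Gamma (y + (1 - p))) * (π / sin (π * p)) := by
  rw [Be, Be, ← Gamma_mul_Gamma_one_sub]
  ring

lemma mul_div_Be_mul_Be_eq {x y N B L S p : ℝ} (hx : 0 < x) (hy : 0 < y) (hN : 0 < N)
    (hB : B ≠ 0) (hL : L ≠ 0) (hp : p ∈ Ioo (0 : ℝ) 1) :
    N / L * (N / (x * B * y)) * (S / (Be x p * Be y (1 - p))) =
      S / L * gammaRatio x p * gammaRatio y (1 - p) *
        (N / B * (x / N) ^ (p - 1) * (y / N) ^ (-p)) * (sin (π * p) / π) := by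
  have hsin : sin (π * p) ≠ 0 :=
    (sin_pos_of_pos_of_lt_pi (by nlinarith [pi_pos, hp.1]) (by nlinarith [pi_pos, hp.2])).ne'
  have := Gamma_pos_of_pos hx
  have := Gamma_pos_of_pos hy
  have := Gamma_pos_of_pos (show 0 < x + p by linarith [hp.1])
  have := Gamma_pos_of_pos (show 0 < y + (1 - p) by linarith [hp.2])
  rw [Be_mul_Be_one_sub, gammaRatio, gammaRatio, div_rpow hx.le hN.le, div_rpow hy.le hN.le,
    rpow_sub hx, rpow_sub hN, rpow_sub hy, rpow_neg hy.le, rpow_neg hN.le, rpow_one, rpow_one,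
    rpow_one]
  have := rpow_pos_of_pos hx p
  have := rpow_pos_of_pos hy p
  have := rpow_pos_of_pos hN p
  field_simp

noncomputable def scaledIntegrand (n b : ℕ) (p : ℝ) : ℝ :=
  (∑ k ∈ Finset.Icc 1 (b - 1), 1 / ((k : ℝ) - p)) / log n * gammaRatio (n - b) p *
    gammaRatio (b - 1) (1 - p) * (n / b * ((n - b) / n) ^ (p - 1) * ((b - 1) / n) ^ (-p)) *
    (sin (π * p) / π)

section ScaledIntegrand

variable {n b : ℕ}

lemma mul_F_zero_eq_integral_scaledIntegrand (hb : 1 < b) (hbn : b < n) :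
    (n / log n) * F n b 0 = ∫ p in Ioo (0 : ℝ) 1, scaledIntegrand n b p := by
  have hb' : (1 : ℝ) < b := by exact_mod_cast hb
  have hbn' : (b : ℝ) < n := by exact_mod_cast hbn
  have hlog : log n ≠ 0 := (log_pos (hb'.trans hbn')).ne'
  rw [F, ← mul_assoc, ← intervalIntegral.integral_const_mul,
    intervalIntegral.integral_of_le zero_le_one, integral_Ioc_eq_integral_Ioo]
  refine setIntegral_congr_fun measurableSet_Ioo fun p hp => ?_
  simp only [neg_zero, exp_zero, one_mul]
  exact mul_div_Be_mul_Be_eq (by linarith) (by linarith) (by linarith) (by positivity) hlog hp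

lemma continuousOn_scaledIntegrand (hb : 1 < b) (hbn : b < n) :
    ContinuousOn (scaledIntegrand n b) (Ioo 0 1) := by
  have hb' : (1 : ℝ) < b := by exact_mod_cast hb
  have hbn' : (b : ℝ) < n := by exact_mod_cast hbn
  intro p hp
  refine ContinuousAt.continuousWithinAt ?_
  have hsum : ContinuousAt (fun p => ∑ k ∈ Finset.Icc 1 (b - 1), 1 / ((k : ℝ) - p)) p := by
    refine tendsto_finsetSum _ fun k hk => continuousAt_const.div
      (continuousAt_const.sub continuousAt_id) ?_
    have : (1 : ℝ) ≤ k := by exact_mod_cast (Finset.mem_Icc.1 hk).1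
    linarith [hp.2]
  have hR1 := continuousAt_gammaRatio (x := n - b) (p := p) (by linarith) (by linarith [hp.1])
  have hR2 : ContinuousAt (fun p => gammaRatio (b - 1) (1 - p)) p :=
    (continuousAt_gammaRatio (x := b - 1) (by linarith) (by linarith [hp.2])).comp
      (continuousAt_const.sub continuousAt_id)
  have hK : ContinuousAt
      (fun p : ℝ => n / b * ((n - b) / n : ℝ) ^ (p - 1) * ((b - 1) / n : ℝ) ^ (-p)) p := by
    have : ((n : ℝ) - b) / n ≠ 0 := (div_pos (by linarith) (by linarith)).ne'
    have : ((b : ℝ) - 1) / n ≠ 0 := (div_pos (by linarith) (by linarith)).ne'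
    fun_prop (disch := assumption)
  exact ((((hsum.div_const _).mul hR1).mul hR2).mul hK).mul (by fun_prop)

lemma norm_scaledIntegrand_le {p : ℝ} (hb : 1 < b) (hbn : b < n) (hp : p ∈ Ioo (0 : ℝ) 1)
    (hlog : (π + 1 + log ↑(b - 1)) / log n ≤ π) :
    ‖scaledIntegrand n b p‖ ≤ n / b * ((n - b) / n : ℝ)⁻¹ * ((b - 1) / n : ℝ)⁻¹ := by
  have hb' : (1 : ℝ) < b := by exact_mod_cast hb
  have hbn' : (b : ℝ) < n := by exact_mod_cast hbn
  have hlogn : 0 < log n := log_pos (hb'.trans hbn')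
  set S := ∑ k ∈ Finset.Icc 1 (b - 1), 1 / ((k : ℝ) - p)
  have hS : 0 ≤ S := Finset.sum_nonneg fun k hk => by
    have : (1 : ℝ) ≤ k := by exact_mod_cast (Finset.mem_Icc.1 hk).1
    exact one_div_nonneg.2 (by linarith [hp.2])
  have hsin : 0 ≤ sin (π * p) :=
    sin_nonneg_of_nonneg_of_le_pi (by nlinarith [pi_pos, hp.1]) (by nlinarith [pi_pos, hp.2])
  have hSsin : S / log n * (sin (π * p) / π) ≤ 1 := by
    rw [div_mul_div_comm, div_le_one (by positivity)]
    calc S * sin (π * p) ≤ π + 1 + log ↑(b - 1) := sum_inv_sub_mul_sin_le _ hp.1.le hp.2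
      _ ≤ log n * π := by rwa [div_le_iff₀ hlogn, mul_comm] at hlog
  have hp' : 1 - p ∈ Ioo (0 : ℝ) 1 := ⟨by linarith [hp.2], by linarith [hp.1]⟩
  have hx : 0 < ((n : ℝ) - b) / n := div_pos (by linarith) (by linarith)
  have hy : 0 < ((b : ℝ) - 1) / n := div_pos (by linarith) (by linarith)
  have rpow_le_inv : ∀ {t e : ℝ}, 0 < t → t ≤ 1 → -1 ≤ e → t ^ e ≤ t⁻¹ := fun ht0 ht1 he => by
    simpa [rpow_neg_one] using rpow_le_rpow_of_exponent_ge ht0 ht1 he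
  have hK : (n / b * (((n : ℝ) - b) / n) ^ (p - 1) * (((b : ℝ) - 1) / n) ^ (-p)) ≤
      n / b * ((n - b) / n : ℝ)⁻¹ * ((b - 1) / n : ℝ)⁻¹ := by
    gcongr
    · exact rpow_le_inv hx ((div_le_one (by linarith)).2 (by linarith)) (by linarith [hp.1])
    · exact rpow_le_inv hy ((div_le_one (by linarith)).2 (by linarith)) (by linarith [hp.2])
  have hR1 := gammaRatio_nonneg (x := n - b) (by linarith) hp
  have hR2 := gammaRatio_nonneg (x := b - 1) (by linarith) hp'
  calc ‖scaledIntegrand n b p‖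
      = S / log n * (sin (π * p) / π) * (gammaRatio (n - b) p * gammaRatio (b - 1) (1 - p)) *
          (n / b * (((n : ℝ) - b) / n) ^ (p - 1) * (((b : ℝ) - 1) / n) ^ (-p)) := by
        rw [norm_of_nonneg (by unfold scaledIntegrand; positivity), scaledIntegrand]
        ring
    _ ≤ 1 * (1 * 1) * (n / b * ((n - b) / n : ℝ)⁻¹ * ((b - 1) / n : ℝ)⁻¹) := by
        gcongr
        · exact gammaRatio_le_one (by linarith) hp
        · exact gammaRatio_le_one (by linarith) hp'
    _ = _ := by ring

end ScaledIntegrand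

lemma tendsto_atTop_of_tendsto_div_natCast {f : ℕ → ℝ} {c : ℝ} (hc : 0 < c)
    (h : Tendsto (fun n => f n / n) atTop (𝓝 c)) : Tendsto f atTop atTop := by
  refine (h.pos_mul_atTop hc tendsto_natCast_atTop_atTop).congr' ?_
  filter_upwards [eventually_gt_atTop 0] with n hn
  field_simp [(Nat.cast_pos.2 hn).ne']

section Asymptotics

variable {u : ℝ} {b : ℕ → ℕ}

lemma tendsto_natCast_sub_div (hlim : Tendsto (fun n => (b n : ℝ) / n) atTop (𝓝 u)) :
    Tendsto (fun n : ℕ => ((n : ℝ) - b n) / n) atTop (𝓝 (1 - u)) := by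
  refine (tendsto_const_nhds.sub hlim).congr' ?_
  filter_upwards [eventually_gt_atTop 0] with n hn
  field_simp [(Nat.cast_pos.2 hn).ne']

lemma tendsto_sub_one_div (hlim : Tendsto (fun n => (b n : ℝ) / n) atTop (𝓝 u)) :
    Tendsto (fun n : ℕ => ((b n : ℝ) - 1) / n) atTop (𝓝 u) := by
  simpa [sub_div] using hlim.sub tendsto_one_div_atTop_nhds_zero_nat

variable (hu0 : 0 < u) (hu1 : u < 1) (hlim : Tendsto (fun n => (b n : ℝ) / n) atTop (𝓝 u))
include hu0 hu1 hlim

lemma eventually_one_lt_and_lt : ∀ᶠ n in atTop, 1 < b n ∧ b n < n := by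
  filter_upwards [(tendsto_atTop_of_tendsto_div_natCast hu0 hlim).eventually_gt_atTop 1,
    (tendsto_atTop_of_tendsto_div_natCast (sub_pos.2 hu1)
      (tendsto_natCast_sub_div hlim)).eventually_gt_atTop 0] with n h1 h2
  exact ⟨by exact_mod_cast h1, by exact_mod_cast sub_pos.1 h2⟩

lemma tendsto_natCast_pred_div : Tendsto (fun n => ((b n - 1 : ℕ) : ℝ) / n) atTop (𝓝 u) := by
  refine (tendsto_sub_one_div hlim).congr' ?_
  filter_upwards [eventually_one_lt_and_lt hu0 hu1 hlim] with n hn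
  rw [Nat.cast_sub hn.1.le, Nat.cast_one]

lemma tendsto_scaledIntegrand {p : ℝ} (hp : p ∈ Ioo (0 : ℝ) 1) :
    Tendsto (fun n => scaledIntegrand n (b n) p) atTop (𝓝 (limitDensity u p)) := by
  have h1u : 0 < 1 - u := sub_pos.2 hu1
  have hS := tendsto_sum_inv_sub_div_log hu0 (tendsto_natCast_pred_div hu0 hu1 hlim) hp.1.le hp.2
  have hR1 := tendsto_gammaRatio (tendsto_atTop_of_tendsto_div_natCast h1u
    (tendsto_natCast_sub_div hlim)) hp
  have hR2 := tendsto_gammaRatio (p := 1 - p) (tendsto_atTop_of_tendsto_div_natCast hu0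
    (tendsto_sub_one_div hlim)) ⟨by linarith [hp.2], by linarith [hp.1]⟩
  have hK := ((hlim.inv₀ hu0.ne').mul ((tendsto_natCast_sub_div hlim).rpow_const
    (p := p - 1) (Or.inl h1u.ne'))).mul ((tendsto_sub_one_div hlim).rpow_const
    (p := -p) (Or.inl hu0.ne'))
  convert (((hS.mul hR1).mul hR2).mul hK).mul (tendsto_const_nhds (x := sin (π * p) / π))
    using 2 with n
  · simp only [scaledIntegrand, inv_div]
  · simp only [limitDensity, one_mul]

lemma eventually_norm_scaledIntegrand_le : ∀ᶠ n in atTop,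
    ∀ p ∈ Ioo (0 : ℝ) 1, ‖scaledIntegrand n (b n) p‖ ≤ u⁻¹ * (1 - u)⁻¹ * u⁻¹ + 1 := by
  have hlog := (tendsto_const_add_log_div_log hu0 (tendsto_natCast_pred_div hu0 hu1 hlim)
    (π + 1)).eventually (eventually_le_nhds (by linarith [pi_gt_three] : (1 : ℝ) < π))
  have hM := ((hlim.inv₀ hu0.ne').mul ((tendsto_natCast_sub_div hlim).inv₀ (sub_pos.2 hu1).ne')).mul
    ((tendsto_sub_one_div hlim).inv₀ hu0.ne')
  filter_upwards [eventually_one_lt_and_lt hu0 hu1 hlim, hlog,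
    hM.eventually (eventually_le_nhds (lt_add_one _))] with n hn hlogn hMn p hp
  refine (norm_scaledIntegrand_le hn.1 hn.2 hp hlogn).trans ?_
  simpa only [inv_div] using hMn

end Asymptotics

theorem stmt17_general (u : ℝ) (hu : u ∈ Set.Ico (1 / 2 : ℝ) 1) (b : ℕ → ℕ)
    (hlim : Filter.Tendsto (fun n : ℕ => (b n : ℝ) / (n : ℝ)) Filter.atTop (nhds u)) :
    Filter.Tendsto (fun n : ℕ => ((n : ℝ) / Real.log n) * F n (b n) 0)
      Filter.atTop (nhds (G (Real.log (1 - u) - Real.log u) / (u * (1 - u)))) := by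
  have hu0 : 0 < u := by linarith [hu.1]
  have hb := eventually_one_lt_and_lt hu0 hu.2 hlim
  rw [← integral_limitDensity hu0 hu.2]
  refine (tendsto_integral_filter_of_dominated_convergence (F := fun n => scaledIntegrand n (b n))
    (fun _ => u⁻¹ * (1 - u)⁻¹ * u⁻¹ + 1) ?_ ?_ (integrable_const _) ?_).congr' ?_
  · filter_upwards [hb] with n hn
    exact (continuousOn_scaledIntegrand hn.1 hn.2).aestronglyMeasurable measurableSet_Ioo
  · filter_upwards [eventually_norm_scaledIntegrand_le hu0 hu.2 hlim] with n hn
    exact (ae_restrict_iff' measurableSet_Ioo).2 (Eventually.of_forall hn)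
  · exact (ae_restrict_iff' measurableSet_Ioo).2
      (Eventually.of_forall fun p hp => tendsto_scaledIntegrand hu0 hu.2 hlim hp)
  · filter_upwards [hb] with n hn
    exact (mul_F_zero_eq_integral_scaledIntegrand hn.1 hn.2).symm

/-- If `n/2 < b_n < n` and `b_n/n → u ∈ [1/2,1)` then, with `α = log(1-u) - log u`,
`(n/log n) F_{n,b_n}(0) → G(α)/(u(1-u))`. -/
theorem stmt17 (u : ℝ) (hu : u ∈ Set.Ico (1 / 2 : ℝ) 1) (b : ℕ → ℕ)
    (hb : ∀ᶠ n : ℕ in Filter.atTop, n < 2 * b n ∧ b n < n)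
    (hlim : Filter.Tendsto (fun n : ℕ => (b n : ℝ) / (n : ℝ)) Filter.atTop (nhds u)) :
    Filter.Tendsto (fun n : ℕ => ((n : ℝ) / Real.log n) * F n (b n) 0)
      Filter.atTop (nhds (G (Real.log (1 - u) - Real.log u) / (u * (1 - u)))) :=
  stmt17_general u hu b hlim
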